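/- arXiv:1701.03083 — 5 statements merged into one kernel-verified Lean document; each statement's English description precedes it below -/
import Mathlib

section
/- For all complex numbers u and v, | ū/(1+|u|²) − v̄/(1+|v|²) | ≤ |u − v|. -/
/-!
Over the common denominator `(1 + |u|²)(1 + |v|²)` the numerator of `u/(1+|u|²) - v/(1+|v|²)` is
`(u - v) - u v conj (u - v)`, of norm at most `(1 + |u| |v|) |u - v|`, and
`1 + a b ≤ (1 + a²)(1 + b²)`. Conjugation is an isometry, so the same bound holds for `ū, v̄`.
-/

open RCLike ComplexConjugate

variable {𝕜 : Type*} [RCLike 𝕜]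

theorem div_one_add_sq_norm_sub_div_one_add_sq_norm (u v : 𝕜) :
    u / (1 + (‖u‖ : 𝕜) ^ 2) - v / (1 + (‖v‖ : 𝕜) ^ 2) =
      (u - v - u * v * conj (u - v)) / ((1 + (‖u‖ : 𝕜) ^ 2) * (1 + (‖v‖ : 𝕜) ^ 2)) := by
  have hu : (1 + (‖u‖ : 𝕜) ^ 2) ≠ 0 := by norm_cast; positivity
  have hv : (1 + (‖v‖ : 𝕜) ^ 2) ≠ 0 := by norm_cast; positivity
  rw [div_sub_div _ _ hu hv, ← mul_conj, ← mul_conj, map_sub]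
  ring

theorem one_add_mul_le_one_add_sq_mul_one_add_sq (a b : ℝ) :
    1 + a * b ≤ (1 + a ^ 2) * (1 + b ^ 2) := by
  nlinarith [sq_nonneg (a - b), sq_nonneg (a * b)]

theorem norm_div_one_add_sq_norm_sub_le (u v : 𝕜) :
    ‖u / (1 + (‖u‖ : 𝕜) ^ 2) - v / (1 + (‖v‖ : 𝕜) ^ 2)‖ ≤ ‖u - v‖ := by
  have hnum : ‖u - v - u * v * conj (u - v)‖ ≤ (1 + ‖u‖ * ‖v‖) * ‖u - v‖ :=
    calc ‖u - v - u * v * conj (u - v)‖ ≤ ‖u - v‖ + ‖u * v * conj (u - v)‖ := norm_sub_le _ _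
      _ = (1 + ‖u‖ * ‖v‖) * ‖u - v‖ := by rw [norm_mul, norm_mul, norm_conj]; ring
  have hden : ‖(1 + (‖u‖ : 𝕜) ^ 2) * (1 + (‖v‖ : 𝕜) ^ 2)‖ = (1 + ‖u‖ ^ 2) * (1 + ‖v‖ ^ 2) := by
    norm_cast; exact abs_of_pos (by positivity)
  rw [div_one_add_sq_norm_sub_div_one_add_sq_norm, norm_div, hden, div_le_iff₀ (by positivity)]
  calc _ ≤ (1 + ‖u‖ * ‖v‖) * ‖u - v‖ := hnum
    _ ≤ ((1 + ‖u‖ ^ 2) * (1 + ‖v‖ ^ 2)) * ‖u - v‖ := by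
      gcongr; exact one_add_mul_le_one_add_sq_mul_one_add_sq _ _
    _ = _ := by ring

theorem stmt_3 (u v : ℂ) :
    ‖(starRingEnd ℂ) u / (1 + (‖u‖ : ℂ) ^ 2) -
        (starRingEnd ℂ) v / (1 + (‖v‖ : ℂ) ^ 2)‖ ≤
      ‖u - v‖ := by
  have h := norm_div_one_add_sq_norm_sub_le (conj u) (conj v)
  rwa [norm_conj, norm_conj, ← map_sub, norm_conj] at h
end

section
/- Let α > 0, c > 0. Define I(r,x) = (c²/r) ∫_{x-r}^{x+r} ∫_0^{r²} t^{-1} exp(-α y²/(2t)) dt dy for r > 0 and x ∈ ℝ. Then sup over all x ∈ ℝ and r > 0 of I(r,x) is at most 2√(2π) c²/√α. -/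
open MeasureTheory Real Set

/-!
Integrating first in space, each time slice of the density `t⁻¹ e^{-αy²/(2t)}` is a Gaussian
of total mass `√(2π/α) t^{-1/2}`, and `∫₀^{r²} t^{-1/2} dt = 2r`. By Tonelli, the integral over
the whole strip `ℝ × (0, r²]` is therefore `2r √(2π/α)`, and restricting `y` to `[x - r, x + r]`
only decreases it, since the density is nonnegative.
-/

/-- `|∂_y m_{c,α}(y, t)|² / c²` for the self-similar solution. -/
noncomputable def selfSimilarEnergyDensity (α t y : ℝ) : ℝ :=
  t⁻¹ * exp (-(α * y ^ 2) / (2 * t))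

namespace selfSimilarEnergyDensity

variable {α t : ℝ}

lemma nonneg (ht : 0 ≤ t) (y : ℝ) : 0 ≤ selfSimilarEnergyDensity α t y :=
  mul_nonneg (inv_nonneg.2 ht) (exp_nonneg _)

lemma eq_gaussian (ht : t ≠ 0) :
    selfSimilarEnergyDensity α t = fun y => t⁻¹ * exp (-(α / (2 * t)) * y ^ 2) := by
  funext y
  rw [selfSimilarEnergyDensity]
  field_simp

lemma integrable (hα : 0 < α) (ht : 0 < t) : Integrable (selfSimilarEnergyDensity α t) := by
  rw [eq_gaussian ht.ne']
  exact (integrable_exp_neg_mul_sq (by positivity)).const_mul _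

lemma integral_eq (ht : 0 < t) :
    ∫ y, selfSimilarEnergyDensity α t y = √(2 * π / α) * t ^ (-(1 / 2) : ℝ) := by
  have hscale : π / (α / (2 * t)) = 2 * π / α * t := by
    rw [div_div_eq_mul_div]; ring
  have hpow : t⁻¹ * √t = t ^ (-(1 / 2) : ℝ) := by
    rw [sqrt_eq_rpow, ← rpow_neg_one t, ← rpow_add ht]; norm_num
  rw [eq_gaussian ht.ne', integral_const_mul, integral_gaussian, hscale, sqrt_mul' _ ht.le, ← hpow]
  ring

end selfSimilarEnergyDensity

lemma integrableOn_rpow_neg_half_Ioc (T : ℝ) :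
    IntegrableOn (fun t : ℝ => t ^ (-(1 / 2) : ℝ)) (Ioc 0 T) := by
  rcases le_total 0 T with hT | hT
  · exact (intervalIntegrable_iff_integrableOn_Ioc_of_le hT).1
      (intervalIntegral.intervalIntegrable_rpow' (by norm_num))
  · simp [Ioc_eq_empty_of_le hT]

lemma integral_rpow_neg_half_Ioc {T : ℝ} (hT : 0 ≤ T) :
    ∫ t in Ioc 0 T, t ^ (-(1 / 2) : ℝ) = 2 * √T := by
  rw [← intervalIntegral.integral_of_le hT, integral_rpow (Or.inl (by norm_num)),
    show (-(1 / 2) : ℝ) + 1 = 1 / 2 by norm_num, zero_rpow (by norm_num), sqrt_eq_rpow]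
  ring

section strip

open selfSimilarEnergyDensity

variable {α : ℝ} (T : ℝ)

lemma integrable_uncurry_selfSimilarEnergyDensity (hα : 0 < α) :
    Integrable (Function.uncurry (selfSimilarEnergyDensity α))
      ((volume.restrict (Ioc 0 T)).prod volume) := by
  have hmeas : Measurable (Function.uncurry (selfSimilarEnergyDensity α)) := by
    unfold Function.uncurry selfSimilarEnergyDensity
    fun_prop
  rw [integrable_prod_iff hmeas.aestronglyMeasurable]
  constructor
  · exact (ae_restrict_iff' measurableSet_Ioc).2 (ae_of_all _ fun t ht => integrable hα ht.1)
  · refine ((integrableOn_rpow_neg_half_Ioc T).const_mul √(2 * π / α)).congr ?_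
    refine (ae_restrict_iff' measurableSet_Ioc).2 (ae_of_all _ fun t ht => ?_)
    simp only [Function.uncurry_apply_pair, norm_of_nonneg (nonneg ht.1.le _), integral_eq ht.1]

lemma integral_integral_selfSimilarEnergyDensity (hα : 0 < α) (hT : 0 ≤ T) :
    ∫ y, ∫ t in Ioc 0 T, selfSimilarEnergyDensity α t y = 2 * √(2 * π / α) * √T := by
  rw [← integral_integral_swap (integrable_uncurry_selfSimilarEnergyDensity T hα),
    setIntegral_congr_fun measurableSet_Ioc fun t ht => integral_eq ht.1, integral_const_mul,
    integral_rpow_neg_half_Ioc hT]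
  ring

lemma intervalIntegral_selfSimilarEnergyDensity_le (hα : 0 < α) (hT : 0 ≤ T) {a b : ℝ}
    (hab : a ≤ b) :
    ∫ y in a..b, ∫ t in Ioc 0 T, selfSimilarEnergyDensity α t y ≤ 2 * √(2 * π / α) * √T := by
  rw [intervalIntegral.integral_of_le hab, ← integral_integral_selfSimilarEnergyDensity T hα hT]
  refine setIntegral_le_integral
    (integrable_uncurry_selfSimilarEnergyDensity T hα).integral_prod_right (ae_of_all _ fun y => ?_)
  exact setIntegral_nonneg measurableSet_Ioc fun t ht => nonneg ht.1.le y

end strip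

theorem stmt_8_general (α c : ℝ) (hα : 0 < α) (x r : ℝ) (hr : 0 < r) :
    (c ^ 2 / r) * ∫ y in (x - r)..(x + r),
        ∫ t in Set.Ioc (0 : ℝ) (r ^ 2), t⁻¹ * Real.exp (-(α * y ^ 2) / (2 * t)) ≤
      2 * Real.sqrt (2 * Real.pi) * c ^ 2 / Real.sqrt α := by
  have hbound := intervalIntegral_selfSimilarEnergyDensity_le (r ^ 2) hα (sq_nonneg r)
    (by linarith : x - r ≤ x + r)
  rw [sqrt_sq hr.le] at hbound
  calc (c ^ 2 / r) * ∫ y in (x - r)..(x + r), ∫ t in Ioc 0 (r ^ 2), selfSimilarEnergyDensity α t y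
      ≤ (c ^ 2 / r) * (2 * √(2 * π / α) * r) := by gcongr
    _ = 2 * √(2 * π) * c ^ 2 / √α := by
      rw [sqrt_div' _ hα.le]
      field_simp

/-- The local parabolic energy `I(r,x) = (c²/r) ∫_{x-r}^{x+r} ∫_0^{r²} t⁻¹ e^{-αy²/(2t)} dt dy`
of the self-similar solution is uniformly bounded by `2√(2π) c²/√α`. -/
theorem stmt_8 (α c : ℝ) (hα : 0 < α) (hc : 0 < c) (x r : ℝ) (hr : 0 < r) :
    (c ^ 2 / r) * ∫ y in (x - r)..(x + r),
        ∫ t in Set.Ioc (0 : ℝ) (r ^ 2), t⁻¹ * Real.exp (-(α * y ^ 2) / (2 * t)) ≤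
      2 * Real.sqrt (2 * Real.pi) * c ^ 2 / Real.sqrt α :=
  stmt_8_general α c hα x r hr
end

section
/- For c > 0, define m_{c,1}: ℝ × ℝ⁺ → ℝ³ by m_{c,1}(x,t) = (cos(c·Erf(x/√t)), sin(c·Erf(x/√t)), 0), where Erf(s) = ∫_0^s e^{-σ²/4} dσ. Then |m_{c,1}(x,t)| = 1 for all (x,t), and m_{c,1} satisfies the harmonic map heat flow equation ∂_t m = Δm + |∂_x m|² m on ℝ × ℝ⁺ (which is the LLG equation with α = 1, β = 0). -/
/-!
Writing `m = (cos u, sin u, 0)` one finds `∂ₓ m = uₓ · m⊥` and `∂ₓₓ m = uₓₓ · m⊥ - uₓ² · m`,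
with `m⊥ = (-sin u, cos u, 0)` a unit vector, so `∂ₓₓ m + |∂ₓ m|² m = uₓₓ · m⊥`, while
`∂ₜ m = uₜ · m⊥`. Hence `m` solves the harmonic map heat flow as soon as the phase `u` solves the
linear heat equation, and `u(x, t) = c Erf(x / √t)` does because `Erf'' = -(s / 2) Erf'`.
-/

open Real

noncomputable section

def equator (θ : ℝ) : EuclideanSpace ℝ (Fin 3) :=
  (WithLp.equiv 2 (Fin 3 → ℝ)).symm ![cos θ, sin θ, 0]

def equatorTangent (θ : ℝ) : EuclideanSpace ℝ (Fin 3) :=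
  (WithLp.equiv 2 (Fin 3 → ℝ)).symm ![-sin θ, cos θ, 0]

lemma hasDerivAt_euclideanSpace_fin_three {f g h : ℝ → ℝ} {f' g' h' x : ℝ}
    (hf : HasDerivAt f f' x) (hg : HasDerivAt g g' x) (hh : HasDerivAt h h' x) :
    HasDerivAt (fun y => (WithLp.equiv 2 (Fin 3 → ℝ)).symm ![f y, g y, h y])
      ((WithLp.equiv 2 (Fin 3 → ℝ)).symm ![f', g', h']) x := by
  have hpi : HasDerivAt (fun y => ![f y, g y, h y]) ![f', g', h'] x := by
    rw [hasDerivAt_pi]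
    intro i
    fin_cases i <;> simpa
  exact (EuclideanSpace.equiv (Fin 3) ℝ).symm.toContinuousLinearMap.hasFDerivAt.comp_hasDerivAt
    x hpi

lemma hasDerivAt_equator (θ : ℝ) : HasDerivAt equator (equatorTangent θ) θ :=
  hasDerivAt_euclideanSpace_fin_three (hasDerivAt_cos θ) (hasDerivAt_sin θ) (hasDerivAt_const θ 0)

lemma hasDerivAt_equatorTangent (θ : ℝ) : HasDerivAt equatorTangent (-equator θ) θ := by
  refine (hasDerivAt_euclideanSpace_fin_three (hasDerivAt_sin θ).neg (hasDerivAt_cos θ)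
    (hasDerivAt_const θ (0 : ℝ))).congr_deriv ?_
  ext i
  fin_cases i <;> simp [equator]

lemma norm_euclideanSpace_fin_three_of_sq_add_sq {a b : ℝ} (h : a ^ 2 + b ^ 2 = 1) :
    ‖(WithLp.equiv 2 (Fin 3 → ℝ)).symm ![a, b, 0]‖ = 1 := by
  simp [EuclideanSpace.norm_eq, Fin.sum_univ_three, h]

lemma norm_equator (θ : ℝ) : ‖equator θ‖ = 1 :=
  norm_euclideanSpace_fin_three_of_sq_add_sq (cos_sq_add_sin_sq θ)

lemma norm_equatorTangent (θ : ℝ) : ‖equatorTangent θ‖ = 1 :=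
  norm_euclideanSpace_fin_three_of_sq_add_sq (by rw [neg_sq, sin_sq_add_cos_sq])

/-- `∂ₜ u = ∂ₓₓ u` at `(x, t)`; differentiability is required so that this is not an identity
between junk values of `deriv`. -/
def HeatEquationAt (u : ℝ → ℝ → ℝ) (x t : ℝ) : Prop :=
  (∀ y, DifferentiableAt ℝ (fun z => u z t) y) ∧
    DifferentiableAt ℝ (fun y => deriv (fun z => u z t) y) x ∧
    DifferentiableAt ℝ (u x) t ∧
    deriv (u x) t = deriv (fun y => deriv (fun z => u z t) y) x

theorem HeatEquationAt.equator_comp {u : ℝ → ℝ → ℝ} {x t : ℝ} (hu : HeatEquationAt u x t) :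
    deriv (fun s => equator (u x s)) t =
      deriv (fun y => deriv (fun z => equator (u z t)) y) x +
        ‖deriv (fun z => equator (u z t)) x‖ ^ 2 • equator (u x t) := by
  obtain ⟨hx, hxx, ht, heat⟩ := hu
  set ux := fun y => deriv (fun z => u z t) y
  have hmx (y : ℝ) : deriv (fun z => equator (u z t)) y = ux y • equatorTangent (u y t) :=
    ((hasDerivAt_equator _).scomp y (hx y).hasDerivAt).deriv
  have hmxx : HasDerivAt (fun y => ux y • equatorTangent (u y t))
      (ux x • (ux x • -equator (u x t)) + deriv ux x • equatorTangent (u x t)) x :=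
    hxx.hasDerivAt.smul ((hasDerivAt_equatorTangent _).scomp x (hx x).hasDerivAt)
  have hmt : HasDerivAt (fun s => equator (u x s)) (deriv (u x) t • equatorTangent (u x t)) t :=
    (hasDerivAt_equator _).scomp t ht.hasDerivAt
  rw [hmt.deriv, funext hmx, hmxx.deriv, norm_smul, norm_equatorTangent, mul_one,
    Real.norm_eq_abs, sq_abs, heat]
  module

lemma hasDerivAt_div_sqrt {t : ℝ} (ht : 0 < t) (x : ℝ) :
    HasDerivAt (fun s => x / √s) (-(x / √t) / (2 * t)) t := by
  have hst : √t ≠ 0 := (sqrt_pos.mpr ht).ne'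
  refine ((hasDerivAt_const t x).div (hasDerivAt_sqrt ht.ne') hst).congr_deriv ?_
  rw [sq_sqrt ht.le]
  field_simp
  ring

/-- For `u = g (x / √t)` the heat equation reduces to the ODE `g'' = -(s / 2) g'`. -/
theorem heatEquationAt_comp_div_sqrt {g g' : ℝ → ℝ} (hg : ∀ s, HasDerivAt g (g' s) s)
    (hg' : ∀ s, HasDerivAt g' (-(s / 2) * g' s) s) {t : ℝ} (ht : 0 < t) (x : ℝ) :
    HeatEquationAt (fun x t => g (x / √t)) x t := by
  have hx : ∀ y, HasDerivAt (fun z => g (z / √t)) (g' (y / √t) * (1 / √t)) y := fun y =>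
    (hg _).comp y ((hasDerivAt_id y).div_const _)
  have hux : (fun y => deriv (fun z => g (z / √t)) y) = fun y => g' (y / √t) * (1 / √t) :=
    funext fun y => (hx y).deriv
  have hxx : HasDerivAt (fun y => g' (y / √t) * (1 / √t))
      (-(x / √t / 2) * g' (x / √t) * (1 / √t) * (1 / √t)) x :=
    ((hg' _).comp x ((hasDerivAt_id x).div_const _)).mul_const _
  have hdt : HasDerivAt (fun s => g (x / √s)) (g' (x / √t) * (-(x / √t) / (2 * t))) t :=
    (hg _).comp t (hasDerivAt_div_sqrt ht x)
  refine ⟨fun y => (hx y).differentiableAt, ?_, hdt.differentiableAt, ?_⟩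
  · rw [hux]
    exact hxx.differentiableAt
  · rw [hdt.deriv, hux, hxx.deriv]
    have hst : √t ≠ 0 := (sqrt_pos.mpr ht).ne'
    field_simp
    rw [sq_sqrt ht.le]
    ring

lemma hasDerivAt_integral_exp_neg_sq_div_four (s : ℝ) :
    HasDerivAt (fun s => ∫ σ in (0 : ℝ)..s, exp (-σ ^ 2 / 4)) (exp (-s ^ 2 / 4)) s :=
  (Continuous.integral_hasStrictDerivAt (by fun_prop) 0 s).hasDerivAt

lemma hasDerivAt_exp_neg_sq_div_four (s : ℝ) :
    HasDerivAt (fun s => exp (-s ^ 2 / 4)) (-(s / 2) * exp (-s ^ 2 / 4)) s := by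
  have h : HasDerivAt (fun s : ℝ => -s ^ 2 / 4) (-(s / 2)) s :=
    ((hasDerivAt_pow 2 s).neg.div_const 4).congr_deriv (by ring)
  exact h.exp.congr_deriv (by ring)

end

theorem stmt_11_general (c : ℝ)
    (Erf : ℝ → ℝ) (hErf : ∀ s : ℝ, Erf s = ∫ σ in (0:ℝ)..s, Real.exp (-σ ^ 2 / 4))
    (m : ℝ → ℝ → EuclideanSpace ℝ (Fin 3))
    (hm : ∀ x t : ℝ, m x t = (WithLp.equiv 2 (Fin 3 → ℝ)).symm
      ![Real.cos (c * Erf (x / Real.sqrt t)), Real.sin (c * Erf (x / Real.sqrt t)), 0]) :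
    (∀ x t : ℝ, 0 < t → ‖m x t‖ = 1) ∧
    (∀ x t : ℝ, 0 < t →
      deriv (fun s => m x s) t =
        deriv (fun y => deriv (fun z => m z t) y) x +
          ‖deriv (fun z => m z t) x‖ ^ 2 • m x t) := by
  obtain rfl : m = fun x t => equator (c * Erf (x / √t)) := funext fun x => funext (hm x)
  obtain rfl : Erf = fun s => ∫ σ in (0 : ℝ)..s, exp (-σ ^ 2 / 4) := funext hErf
  have hg (s : ℝ) := (hasDerivAt_integral_exp_neg_sq_div_four s).const_mul c
  have hg' (s : ℝ) :
      HasDerivAt (fun s => c * exp (-s ^ 2 / 4)) (-(s / 2) * (c * exp (-s ^ 2 / 4))) s :=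
    ((hasDerivAt_exp_neg_sq_div_four s).const_mul c).congr_deriv (by ring)
  exact ⟨fun x t _ => norm_equator _, fun x t ht =>
    (heatEquationAt_comp_div_sqrt hg hg' ht x).equator_comp⟩

/-- The explicit self-similar map `m_{c,1}(x,t) = (cos(c Erf(x/√t)), sin(c Erf(x/√t)), 0)`
takes values in the unit sphere and solves the harmonic map heat flow
`∂_t m = ∂_{xx} m + |∂_x m|² m` on `ℝ × ℝ⁺`. -/
theorem stmt_11 (c : ℝ) (hc : 0 < c)
    (Erf : ℝ → ℝ) (hErf : ∀ s : ℝ, Erf s = ∫ σ in (0:ℝ)..s, Real.exp (-σ ^ 2 / 4))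
    (m : ℝ → ℝ → EuclideanSpace ℝ (Fin 3))
    (hm : ∀ x t : ℝ, m x t = (WithLp.equiv 2 (Fin 3 → ℝ)).symm
      ![Real.cos (c * Erf (x / Real.sqrt t)), Real.sin (c * Erf (x / Real.sqrt t)), 0]) :
    (∀ x t : ℝ, 0 < t → ‖m x t‖ = 1) ∧
    (∀ x t : ℝ, 0 < t →
      deriv (fun s => m x s) t =
        deriv (fun y => deriv (fun z => m z t) y) x +
          ‖deriv (fun z => m z t) x‖ ^ 2 • m x t) :=
  stmt_11_general c Erf hErf m hm
end

section
/- Let α ∈ (0,1), β = √(1−α²), and let c ∈ ℂ \ {0}. Define w(x,t) = (c/√t) exp( i(β|c|²/2) ln t + (iβ − α) x²/(4t) ) for x ∈ ℝ, t > 0, and let φ be a continuous compactly supported function on ℝ with φ(0) = 0 (equivalently, with compact support in ℝ \ {0}). Then ∫_ℝ w(x,t) φ(x) dx → 0 as t → 0⁺. -/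
/-!
Substituting `x = √t y` turns `∫ w(x,t) φ(x) dx` into a unimodular phase times
`c ∫ exp((iβ - α) y²/4) φ(√t y) dy`. Since `α > 0` the Gaussian factor is integrable, so by
dominated convergence the integral tends to `φ 0 ∫ exp((iβ - α) y²/4) dy = 0`.
-/

open MeasureTheory Filter Complex

theorem tendsto_integral_mul_comp_mul_nhds_zero {g φ : ℝ → ℂ} (hg : Integrable g)
    (hφ : Continuous φ) {C : ℝ} (hC : ∀ x, ‖φ x‖ ≤ C) :
    Tendsto (fun s : ℝ => ∫ y, g y * φ (s * y)) (nhds 0) (nhds ((∫ y, g y) * φ 0)) := by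
  rw [← integral_mul_const]
  refine tendsto_integral_filter_of_dominated_convergence (fun y => ‖g y‖ * C) ?_ ?_
    (hg.norm.mul_const C) ?_
  · exact .of_forall fun s =>
      hg.aestronglyMeasurable.mul (hφ.comp (continuous_const.mul continuous_id)).aestronglyMeasurable
  · refine .of_forall fun s => .of_forall fun y => ?_
    rw [norm_mul]
    exact mul_le_mul_of_nonneg_left (hC _) (norm_nonneg _)
  · exact .of_forall fun y => tendsto_const_nhds.mul
      ((hφ.tendsto 0).comp ((continuous_id.mul_const y).tendsto' 0 0 (zero_mul y)))

theorem integrable_cexp_mul_sq_div_four {a : ℂ} (ha : a.re < 0) :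
    Integrable fun y : ℝ => cexp (a * y ^ 2 / 4) := by
  have h := integrable_cexp_neg_mul_sq (b := -a / 4) (by simp [neg_div]; linarith)
  refine h.congr (.of_forall fun y => ?_)
  ring_nf

theorem integral_cexp_mul_sq_div_mul_eq (a : ℂ) (φ : ℝ → ℂ) {t : ℝ} (ht : 0 < t) :
    ∫ x : ℝ, cexp (a * x ^ 2 / (4 * t)) * φ x
      = Real.sqrt t * ∫ y : ℝ, cexp (a * y ^ 2 / 4) * φ (Real.sqrt t * y) := by
  have hs : 0 < Real.sqrt t := Real.sqrt_pos.mpr ht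
  have hsc : ((Real.sqrt t : ℝ) : ℂ) ^ 2 = t := by exact_mod_cast Real.sq_sqrt ht.le
  have htc : (t : ℂ) ≠ 0 := by exact_mod_cast ht.ne'
  have hscale := Measure.integral_comp_mul_left
    (fun x : ℝ => cexp (a * x ^ 2 / (4 * t)) * φ x) (Real.sqrt t)
  rw [abs_of_pos (inv_pos.mpr hs), eq_inv_smul_iff₀ hs.ne'] at hscale
  rw [← hscale, Complex.real_smul]
  congr 2 with y
  push_cast
  rw [mul_pow, hsc]
  field_simp

theorem norm_integral_div_sqrt_mul_cexp_mul (c a : ℂ) (θ : ℝ) (φ : ℝ → ℂ) {t : ℝ} (ht : 0 < t) :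
    ‖∫ x : ℝ, c / Real.sqrt t * cexp (Complex.I * θ + a * x ^ 2 / (4 * t)) * φ x‖
      = ‖c‖ * ‖∫ y : ℝ, cexp (a * y ^ 2 / 4) * φ (Real.sqrt t * y)‖ := by
  have hs : (Real.sqrt t : ℂ) ≠ 0 := by exact_mod_cast (Real.sqrt_pos.mpr ht).ne'
  have hrescale : ∫ x : ℝ, c / Real.sqrt t * cexp (Complex.I * θ + a * x ^ 2 / (4 * t)) * φ x
      = c * cexp (θ * Complex.I) * ∫ y : ℝ, cexp (a * y ^ 2 / 4) * φ (Real.sqrt t * y) := by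
    simp_rw [Complex.exp_add, mul_assoc, integral_const_mul, integral_cexp_mul_sq_div_mul_eq a φ ht]
    field_simp
  rw [hrescale, norm_mul, norm_mul, Complex.norm_exp_ofReal_mul_I, mul_one]

theorem stmt_15_general (α β : ℝ) (hα : α ∈ Set.Ioo (0:ℝ) 1)
    (c : ℂ)
    (w : ℝ → ℝ → ℂ)
    (hw : ∀ (x t : ℝ), 0 < t → w x t = (c / (Real.sqrt t : ℂ)) *
      Complex.exp (Complex.I * (β * (‖c‖) ^ 2 / 2) * Real.log t +
        (Complex.I * β - α) * x ^ 2 / (4 * t)))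
    (φ : ℝ → ℂ) (hφc : Continuous φ) (hφs : HasCompactSupport φ) (hφ0 : φ 0 = 0) :
    Tendsto (fun t : ℝ => ∫ x : ℝ, w x t * φ x)
      (nhdsWithin 0 (Set.Ioi 0)) (nhds 0) := by
  have ha : (Complex.I * β - α).re < 0 := by simp [hα.1]
  obtain ⟨C, hC⟩ := hφc.bounded_above_of_compact_support hφs
  have hsqrt : Tendsto Real.sqrt (nhdsWithin 0 (Set.Ioi 0)) (nhds 0) :=
    (Real.continuous_sqrt.tendsto' 0 0 Real.sqrt_zero).mono_left nhdsWithin_le_nhds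
  have hF := (tendsto_integral_mul_comp_mul_nhds_zero
    (integrable_cexp_mul_sq_div_four ha) hφc hC).comp hsqrt
  rw [hφ0, mul_zero] at hF
  refine squeeze_zero_norm' (eventually_nhdsWithin_of_forall fun t ht => le_of_eq ?_)
    (by simpa using hF.norm.const_mul ‖c‖)
  rw [← norm_integral_div_sqrt_mul_cexp_mul c _ (β * ‖c‖ ^ 2 / 2 * Real.log t) φ ht]
  congr 2 with x
  rw [hw x t ht]
  push_cast
  ring_nf

/-- For the singular solution `w(x,t) = (c/√t) exp(i(β|c|²/2) ln t + (iβ−α)x²/(4t))`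
with `α ∈ (0,1)`, `β = √(1−α²)`, and any continuous compactly supported `φ` with
`φ(0) = 0`, one has `∫ w(x,t)φ(x) dx → 0` as `t → 0⁺`. -/
theorem stmt_15 (α β : ℝ) (hα : α ∈ Set.Ioo (0:ℝ) 1) (hβ : β = Real.sqrt (1 - α ^ 2))
    (c : ℂ) (hc : c ≠ 0)
    (w : ℝ → ℝ → ℂ)
    (hw : ∀ (x t : ℝ), 0 < t → w x t = (c / (Real.sqrt t : ℂ)) *
      Complex.exp (Complex.I * (β * (‖c‖) ^ 2 / 2) * Real.log t +
        (Complex.I * β - α) * x ^ 2 / (4 * t)))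
    (φ : ℝ → ℂ) (hφc : Continuous φ) (hφs : HasCompactSupport φ) (hφ0 : φ 0 = 0) :
    Tendsto (fun t : ℝ => ∫ x : ℝ, w x t * φ x)
      (nhdsWithin 0 (Set.Ioi 0)) (nhds 0) :=
  stmt_15_general α β hα c w hw φ hφc hφs hφ0
end

section
/- Let α ∈ (0,1), β = √(1−α²), c ∈ ℂ \ {0}, and define w(x,t) = (c/√t) exp( i(β|c|²/2) ln t + (iβ − α) x²/(4t) ). Then there is no tempered distribution T such that w(·,t) → T in S'(ℝ) as t → 0⁺; i.e., w(·,t) does not converge in the space of tempered distributions as t → 0⁺. -/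
/-!
Test against the Gaussian `φ(x) = e^{-x²/2}`. The complex Gaussian integral gives
`(∫ w(x,t) φ(x) dx)² = 4πc² / (2t + α - iβ) · e^{iβ|c|² ln t}`, and the first factor has a
nonzero limit as `t → 0⁺`. So convergence of `∫ w(·,t) φ` would force convergence of
`e^{iβ|c|² ln t}`, which is impossible for `β ≠ 0`: shifting `ln t` by `π / (β|c|²)` flips its
sign, while its modulus stays `1`.
-/

open MeasureTheory Filter Complex
open Polynomial Topology
open scoped Real

lemma abs_pow_mul_exp_neg_sq_div_two_le (n : ℕ) (x : ℝ) :
    |x| ^ n * Real.exp (-(x ^ 2 / 2)) ≤ n.factorial * Real.exp (1 / 2) := by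
  have hpow : |x| ^ n ≤ n.factorial * Real.exp |x| := by
    have := Real.pow_div_factorial_le_exp |x| (abs_nonneg x) n
    rwa [div_le_iff₀ (by positivity), mul_comm] at this
  calc |x| ^ n * Real.exp (-(x ^ 2 / 2))
      ≤ n.factorial * Real.exp |x| * Real.exp (-(x ^ 2 / 2)) := by gcongr
    _ = n.factorial * Real.exp (|x| - x ^ 2 / 2) := by
        rw [mul_assoc, ← Real.exp_add, sub_eq_add_neg]
    _ ≤ n.factorial * Real.exp (1 / 2) := by
        gcongr
        nlinarith [sq_abs x, sq_nonneg (|x| - 1)]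

lemma exists_abs_aeval_mul_exp_neg_sq_div_two_le {R : Type*} [CommSemiring R] [Algebra R ℝ]
    (p : R[X]) : ∃ C, ∀ x : ℝ, |aeval x p * Real.exp (-(x ^ 2 / 2))| ≤ C := by
  induction p using Polynomial.induction_on' with
  | add p q hp hq =>
    obtain ⟨C, hC⟩ := hp
    obtain ⟨D, hD⟩ := hq
    refine ⟨C + D, fun x => ?_⟩
    rw [map_add, add_mul]
    exact (abs_add_le _ _).trans (add_le_add (hC x) (hD x))
  | monomial n a =>
    refine ⟨|algebraMap R ℝ a| * (n.factorial * Real.exp (1 / 2)), fun x => ?_⟩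
    rw [aeval_monomial, mul_assoc, abs_mul, abs_mul, abs_pow, abs_of_pos (Real.exp_pos _)]
    exact mul_le_mul_of_nonneg_left (abs_pow_mul_exp_neg_sq_div_two_le n x) (abs_nonneg _)

noncomputable def gaussianSchwartz : SchwartzMap ℝ ℝ where
  toFun x := Real.exp (-(x ^ 2 / 2))
  smooth' := by fun_prop
  decay' k n := by
    obtain ⟨C, hC⟩ := exists_abs_aeval_mul_exp_neg_sq_div_two_le (X ^ k * hermite n)
    refine ⟨C, fun x => ?_⟩
    rw [norm_iteratedFDeriv_eq_norm_iteratedDeriv, iteratedDeriv_eq_iterate,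
      deriv_gaussian_eq_hermite_mul_gaussian]
    simpa [abs_mul, mul_assoc] using hC x

lemma not_tendsto_cexp_I_mul_log_nhdsGT_zero {γ : ℝ} (hγ : γ ≠ 0) (L : ℂ) :
    ¬ Tendsto (fun t : ℝ => cexp (I * γ * Real.log t)) (𝓝[>] 0) (𝓝 L) := by
  intro h
  have hexp : Tendsto (fun s : ℝ => cexp (I * γ * s)) atBot (𝓝 L) := by
    simpa [Function.comp_def] using h.comp Real.tendsto_exp_atBot_nhdsGT
  have hshift : Tendsto (fun s : ℝ => -cexp (I * γ * s)) atBot (𝓝 L) := by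
    refine (hexp.comp (tendsto_atBot_add_const_right _ (π / γ) tendsto_id)).congr fun s => ?_
    have : I * γ * ((s + π / γ : ℝ) : ℂ) = I * γ * s + π * I := by
      have : (γ : ℂ) ≠ 0 := ofReal_ne_zero.2 hγ
      push_cast
      field_simp
    simp only [Function.comp_apply, id, this, exp_add, exp_pi_mul_I, mul_neg_one]
  have hL : L = 0 := by
    have := tendsto_nhds_unique hshift hexp.neg
    linear_combination this / 2
  have hnorm : Tendsto (fun s : ℝ => ‖cexp (I * γ * s)‖) atBot (𝓝 1) :=
    tendsto_const_nhds.congr fun s => by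
      rw [mul_assoc, ← ofReal_mul, mul_comm, norm_exp_ofReal_mul_I]
  have := tendsto_nhds_unique hexp.norm hnorm
  simp [hL] at this

lemma integral_cexp_mul_sq_mul_exp_neg_sq_div_two {a : ℂ} (ha : a.re < 1 / 2) :
    ∫ x : ℝ, cexp (a * x ^ 2) * (Real.exp (-(x ^ 2 / 2)) : ℂ) =
      (π / (1 / 2 - a)) ^ (1 / 2 : ℂ) := by
  have hre : 0 < (1 / 2 - a).re := by simp; linarith
  rw [← integral_gaussian_complex hre]
  congr 1 with x
  push_cast
  rw [← exp_add]
  ring_nf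

lemma two_mul_add_sub_I_mul_ne_zero {t α : ℝ} (h : 0 < 2 * t + α) (β : ℝ) :
    (2 * t + α - I * β : ℂ) ≠ 0 := by
  intro h₀
  have := congrArg re h₀
  simp at this
  linarith

noncomputable def singularSolution (α β : ℝ) (c : ℂ) (x t : ℝ) : ℂ :=
  c / (Real.sqrt t : ℂ) *
    cexp (I * (β * ‖c‖ ^ 2 / 2) * Real.log t + (I * β - α) * x ^ 2 / (4 * t))

lemma sq_integral_singularSolution_mul_exp_neg_sq_div_two {α : ℝ} (hα : 0 ≤ α) (β : ℝ) (c : ℂ)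
    {t : ℝ} (ht : 0 < t) :
    (∫ x : ℝ, singularSolution α β c x t * (Real.exp (-(x ^ 2 / 2)) : ℂ)) ^ 2 =
      4 * π * c ^ 2 / (2 * t + α - I * β) * cexp (I * (β * ‖c‖ ^ 2) * Real.log t) := by
  set a : ℂ := (I * β - α) / (4 * t)
  have ht' : (t : ℂ) ≠ 0 := ofReal_ne_zero.2 ht.ne'
  have ha : a.re < 1 / 2 := by
    have hre : a.re = -α / (4 * t) := by simp [a, div_re, normSq]; field_simp
    have hneg : -α / (4 * t) ≤ 0 := div_nonpos_of_nonpos_of_nonneg (by linarith) (by positivity)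
    linarith
  have hint : ∫ x : ℝ, singularSolution α β c x t * (Real.exp (-(x ^ 2 / 2)) : ℂ) =
      c / (Real.sqrt t : ℂ) * cexp (I * (β * ‖c‖ ^ 2 / 2) * Real.log t) *
        (π / (1 / 2 - a)) ^ (1 / 2 : ℂ) := by
    rw [← integral_cexp_mul_sq_mul_exp_neg_sq_div_two ha, ← integral_const_mul]
    congr 1 with x
    rw [singularSolution, exp_add, show (I * β - α) * (x : ℂ) ^ 2 / (4 * t) = a * x ^ 2 by ring]
    ring
  have hsqrt : ((Real.sqrt t : ℝ) : ℂ) ^ 2 = t := by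
    rw [← ofReal_pow, Real.sq_sqrt ht.le]
  have hcpow : ((π / (1 / 2 - a)) ^ (1 / 2 : ℂ)) ^ 2 = π / (1 / 2 - a) := by
    simpa only [Nat.cast_ofNat, one_div] using cpow_nat_inv_pow (π / (1 / 2 - a)) two_ne_zero
  have hb : 1 / 2 - a = (2 * t + α - I * β) / (4 * t) := by
    simp only [a]
    field_simp
    ring
  have hden := two_mul_add_sub_I_mul_ne_zero (by positivity : 0 < 2 * t + α) β
  rw [hint, mul_pow, mul_pow, hcpow, div_pow, hsqrt, ← exp_nat_mul, hb]
  field_simp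
  ring_nf

/-- The singular solution `w(x,t) = (c/√t) exp(i(β|c|²/2) ln t + (iβ−α)x²/(4t))`
does not converge in the space of tempered distributions as `t → 0⁺`: there is no
assignment `T` of values on Schwartz functions such that `∫ w(x,t)φ(x) dx → T φ`
for every Schwartz function `φ`. -/
theorem stmt_16 (α β : ℝ) (hα : α ∈ Set.Ioo (0:ℝ) 1) (hβ : β = Real.sqrt (1 - α ^ 2))
    (c : ℂ) (hc : c ≠ 0)
    (w : ℝ → ℝ → ℂ)
    (hw : ∀ (x t : ℝ), 0 < t → w x t = (c / (Real.sqrt t : ℂ)) *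
      Complex.exp (Complex.I * (β * ‖c‖ ^ 2 / 2) * Real.log t +
        (Complex.I * β - α) * x ^ 2 / (4 * t))) :
    ¬ ∃ T : SchwartzMap ℝ ℂ → ℂ, ∀ φ : SchwartzMap ℝ ℂ,
      Tendsto (fun t : ℝ => ∫ x : ℝ, w x t * φ x)
        (nhdsWithin 0 (Set.Ioi 0)) (nhds (T φ)) := by
  rintro ⟨T, hT⟩
  obtain ⟨hα₀, hα₁⟩ := hα
  have hγ : β * ‖c‖ ^ 2 ≠ 0 := by
    have : 0 < β := hβ ▸ Real.sqrt_pos.2 (by nlinarith)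
    positivity
  set φ := SchwartzMap.postcompCLM ofRealCLM gaussianSchwartz
  have hfactor : ContinuousWithinAt (fun t : ℝ => (2 * t + α - I * β) / (4 * π * c ^ 2 : ℂ))
      (Set.Ioi 0) 0 := by
    fun_prop
  refine not_tendsto_cexp_I_mul_log_nhdsGT_zero hγ _
    (((hT φ).pow 2).mul hfactor.tendsto |>.congr' ?_)
  filter_upwards [self_mem_nhdsWithin] with t (ht : 0 < t)
  have hint : ∫ x : ℝ, w x t * φ x =
      ∫ x : ℝ, singularSolution α β c x t * (Real.exp (-(x ^ 2 / 2)) : ℂ) := by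
    congr 1 with x
    rw [hw x t ht]
    rfl
  have hden := two_mul_add_sub_I_mul_ne_zero (by positivity : 0 < 2 * t + α) β
  rw [hint, sq_integral_singularSolution_mul_exp_neg_sq_div_two hα₀.le β c ht]
  field_simp
  push_cast
  ring_nf
end
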